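/- arXiv:2108.13544 — 3 statements merged into one kernel-verified Lean document; each statement's English description precedes it below -/
import Mathlib

section
/- Suppose each of n items (n a power of 2, n ≥ 2) has a nonnegative connection cost, and suppose that for every subset S of the items containing the maximum-cost items of any given size, the sum of the ⌈|S|/2⌉ smallest costs within S is at most C. Then the total sum of all n connection costs is at most (log₂ n + 1)·C. -/
/-! Split `{1, …, 2^m}` into `{1}` and the dyadic blocks `{2^j + 1, …, 2^(j+1)}` for `j < m`.
Each block is exactly the set of the `⌈k/2⌉` last indices among `1, …, k` for `k = 2^(j+1)`, so
each of the `m + 1` pieces has sum at most `C`. -/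

open Finset

theorem sum_Ioc_zero_two_pow_le {M : Type*} [AddCommMonoid M] [PartialOrder M]
    [IsOrderedAddMonoid M] (c : ℕ → M) (C : M) (m : ℕ) (h₁ : c 1 ≤ C)
    (hblock : ∀ j < m, ∑ i ∈ Ioc (2 ^ j) (2 ^ (j + 1)), c i ≤ C) :
    ∑ i ∈ Ioc 0 (2 ^ m), c i ≤ (m + 1) • C := by
  induction m with
  | zero =>
    rwa [pow_zero, zero_add, one_smul, ← zero_add 1, Nat.Ioc_succ_singleton, sum_singleton,
      zero_add]
  | succ k ih =>
    rw [← sum_Ioc_consecutive c (Nat.zero_le _) (Nat.pow_le_pow_right two_pos k.le_succ),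
      succ_nsmul]
    exact add_le_add (ih fun j hj => hblock j (hj.trans k.lt_succ_self))
      (hblock k k.lt_succ_self)

theorem two_pow_succ_sub_ceil_half (j : ℕ) :
    2 ^ (j + 1) - (2 ^ (j + 1) + 1) / 2 = 2 ^ j := by
  rw [pow_succ]
  omega

theorem stmt_5_general (m : ℕ) (n : ℕ) (hn : n = 2 ^ m) (C : ℝ)
    (c : ℕ → ℝ)
    (hhalf : ∀ k ∈ Finset.Icc 1 n,
      ∑ i ∈ Finset.Icc (k - (k + 1) / 2 + 1) k, c i ≤ C) :
    ∑ i ∈ Finset.Icc 1 n, c i ≤ (Real.logb 2 n + 1) * C := by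
  subst hn
  have h₁ : c 1 ≤ C := by simpa using hhalf 1 (by simp [Nat.one_le_two_pow])
  have hblock : ∀ j < m, ∑ i ∈ Ioc (2 ^ j) (2 ^ (j + 1)), c i ≤ C := by
    intro j hj
    have := hhalf (2 ^ (j + 1)) (mem_Icc.2 ⟨Nat.one_le_two_pow, Nat.pow_le_pow_right two_pos hj⟩)
    rwa [two_pow_succ_sub_ceil_half, Icc_add_one_left_eq_Ioc] at this
  have hlog : Real.logb 2 ((2 ^ m : ℕ) : ℝ) = m := by
    rw [Nat.cast_pow, Nat.cast_ofNat, Real.logb_pow, Real.logb_self_eq_one one_lt_two, mul_one]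
  rw [hlog, ← Nat.cast_succ, ← nsmul_eq_mul, ← zero_add 1, Icc_add_one_left_eq_Ioc]
  exact sum_Ioc_zero_two_pow_le c C m h₁ hblock

/-- Items indexed `1, ..., n` with `n = 2^m`, costs sorted in non-increasing order.
For every `k`, the set of the `k` maximum-cost items is `{1, ..., k}`, and the
`⌈k/2⌉` smallest costs within it are `c_{k - ⌈k/2⌉ + 1}, ..., c_k`. -/
theorem stmt_5 (m : ℕ) (hm : 1 ≤ m) (n : ℕ) (hn : n = 2 ^ m) (C : ℝ)
    (c : ℕ → ℝ) (hnonneg : ∀ i, 0 ≤ c i)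
    (hsorted : ∀ i j, i ≤ j → c j ≤ c i)
    (hhalf : ∀ k ∈ Finset.Icc 1 n,
      ∑ i ∈ Finset.Icc (k - (k + 1) / 2 + 1) k, c i ≤ C) :
    ∑ i ∈ Finset.Icc 1 n, c i ≤ (Real.logb 2 n + 1) * C :=
  stmt_5_general m n hn C c hhalf
end

section
/- Let T be a finite tree rooted at r and M a subset of its vertices with r ∈ M and |M| ≥ 2. If every leaf of T lies in M, then T can be decomposed into vertex-disjoint nontrivial spiders whose leaves are contained in M and such that every vertex of M is a leaf, root, or center of some spider in the decomposition. -/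
/-!
Root the tree at `r` and let `v` be a lowest vertex with at least two vertices of `M` in its
subtree. Every subtree strictly below `v` contains at most one vertex of `M`, so the paths from `v`
to the vertices of `M` below it meet only at `v`: they are the legs of a spider centered at `v`
whose leaves lie in `M`. If at least two vertices of `M` lie outside the subtree of `v` (one of them
is `r`), recurse on them; the spiders obtained there consist of ancestors of those vertices and so
avoid the subtree of `v`. Otherwise `r` is the only vertex of `M` outside, and the path from `v` to
`r` becomes one more leg of the last spider.
-/

namespace SimpleGraph

variable {V : Type*} {G : SimpleGraph V}

structure Subgraph.IsSpider (S : G.Subgraph) (c : V) : Prop where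
  connected : S.Connected
  isAcyclic : S.coe.IsAcyclic
  center_mem : c ∈ S.verts
  eq_center_of_two_lt : ∀ u ∈ S.verts, 2 < (S.neighborSet u).ncard → u = c
  exists_leaves : ∃ l₁ ∈ S.verts, ∃ l₂ ∈ S.verts, l₁ ≠ l₂ ∧
    (S.neighborSet l₁).ncard = 1 ∧ (S.neighborSet l₂).ncard = 1

structure IsSpiderDecomposition (M : Set V) (L : List (G.Subgraph × V)) : Prop where
  isSpider : ∀ p ∈ L, p.1.IsSpider p.2
  mem_of_leaf : ∀ p ∈ L, ∀ x ∈ p.1.verts, (p.1.neighborSet x).ncard = 1 → x ∈ M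
  pairwise_disjoint : L.Pairwise fun p q => Disjoint p.1.verts q.1.verts
  covers : ∀ m ∈ M, ∃ p ∈ L, m = p.2 ∨ m ∈ p.1.verts ∧ (p.1.neighborSet m).ncard = 1

lemma IsSpiderDecomposition.append {M₁ M₂ : Set V} {L₁ L₂ : List (G.Subgraph × V)}
    (h₁ : IsSpiderDecomposition M₁ L₁) (h₂ : IsSpiderDecomposition M₂ L₂)
    (hdisj : ∀ p ∈ L₁, ∀ q ∈ L₂, Disjoint p.1.verts q.1.verts) :
    IsSpiderDecomposition (M₁ ∪ M₂) (L₁ ++ L₂) where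
  isSpider p hp := (List.mem_append.mp hp).elim (h₁.isSpider p) (h₂.isSpider p)
  mem_of_leaf p hp x hx hdeg := (List.mem_append.mp hp).elim
    (fun hp => Or.inl (h₁.mem_of_leaf p hp x hx hdeg))
    (fun hp => Or.inr (h₂.mem_of_leaf p hp x hx hdeg))
  pairwise_disjoint :=
    List.pairwise_append.mpr ⟨h₁.pairwise_disjoint, h₂.pairwise_disjoint, hdisj⟩
  covers m hm := by
    rcases hm with hm | hm
    · obtain ⟨p, hp, h⟩ := h₁.covers m hm
      exact ⟨p, List.mem_append_left _ hp, h⟩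
    · obtain ⟨p, hp, h⟩ := h₂.covers m hm
      exact ⟨p, List.mem_append_right _ hp, h⟩

namespace IsTree

variable (hG : G.IsTree)

noncomputable def path (u w : V) : G.Walk u w :=
  (hG.existsUnique_path u w).choose

lemma isPath_path (u w : V) : (hG.path u w).IsPath :=
  (hG.existsUnique_path u w).choose_spec.1

lemma eq_path_of_isPath {u w : V} {p : G.Walk u w} (hp : p.IsPath) : p = hG.path u w :=
  (hG.existsUnique_path u w).choose_spec.2 p hp

lemma length_path (u w : V) : (hG.path u w).length = G.dist u w := by
  obtain ⟨p, hp, hlen⟩ := hG.connected.exists_path_of_dist u w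
  rw [← hG.eq_path_of_isPath hp, hlen]

lemma mem_support_path_iff {u w x : V} :
    x ∈ (hG.path u w).support ↔ G.dist u x + G.dist x w = G.dist u w := by
  classical
  constructor
  · intro hx
    have hsplit := congrArg Walk.length ((hG.path u w).take_spec hx)
    rw [Walk.length_append, hG.eq_path_of_isPath ((hG.isPath_path u w).takeUntil hx),
      hG.eq_path_of_isPath ((hG.isPath_path u w).dropUntil hx)] at hsplit
    simpa only [length_path] using hsplit
  · intro hx
    have hp : ((hG.path u x).append (hG.path x w)).IsPath := by
      apply Walk.isPath_of_length_eq_dist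
      rw [Walk.length_append, length_path, length_path, hx]
    rw [← hG.eq_path_of_isPath hp, Walk.mem_support_append_iff]
    exact Or.inl (Walk.end_mem_support _)

def PathsMeetOnlyAt (v : V) (F : Set V) : Prop :=
  ∀ t ∈ F, ∀ t' ∈ F, ∀ x ∈ (hG.path v t).support, x ∈ (hG.path v t').support →
    x = v ∨ t = t'

noncomputable def spider (v : V) (F : Set V) : G.Subgraph :=
  ⨆ t : F, (hG.path v t).toSubgraph

variable {hG} {v : V} {F : Set V}

lemma mem_verts_spider {x : V} :
    x ∈ (hG.spider v F).verts ↔ ∃ t ∈ F, x ∈ (hG.path v t).support := by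
  simp [spider, Subgraph.verts_iSup]

lemma spider_adj {x y : V} :
    (hG.spider v F).Adj x y ↔ ∃ t ∈ F, (hG.path v t).toSubgraph.Adj x y := by
  simp [spider, Subgraph.iSup_adj]

lemma connected_spider (hF : F.Nonempty) : (hG.spider v F).Connected := by
  have hv : v ∈ (hG.spider v F).verts :=
    mem_verts_spider.mpr (hF.imp fun t ht => ⟨ht, Walk.start_mem_support _⟩)
  rw [Subgraph.connected_iff', connected_iff_exists_forall_reachable]
  refine ⟨⟨v, hv⟩, fun ⟨x, hx⟩ => ?_⟩
  obtain ⟨t, ht, hxt⟩ := mem_verts_spider.mp hx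
  have hle : (hG.path v t).toSubgraph ≤ hG.spider v F :=
    le_iSup (fun t : F => (hG.path v t).toSubgraph) ⟨t, ht⟩
  exact ((hG.path v t).toSubgraph_connected ⟨v, (hG.path v t).start_mem_verts_toSubgraph⟩
    ⟨x, (Walk.mem_verts_toSubgraph _).mpr hxt⟩).map (Subgraph.inclusion hle)

variable (hvF : v ∉ F) (hlegs : hG.PathsMeetOnlyAt v F)
include hlegs

lemma neighborSet_spider_of_ne {t x : V} (ht : t ∈ F) (hx : x ∈ (hG.path v t).support)
    (hxv : x ≠ v) :
    (hG.spider v F).neighborSet x = (hG.path v t).toSubgraph.neighborSet x := by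
  ext y
  simp only [Subgraph.mem_neighborSet, spider_adj]
  refine ⟨fun ⟨t', ht', hadj⟩ => ?_, fun hadj => ⟨t, ht, hadj⟩⟩
  obtain rfl := (hlegs t' ht' t ht x (Walk.mem_support_of_adj_toSubgraph hadj) hx).resolve_left hxv
  exact hadj

lemma ncard_neighborSet_spider_of_ne {t x : V} (ht : t ∈ F) (hx : x ∈ (hG.path v t).support)
    (hxv : x ≠ v) (hxt : x ≠ t) : ((hG.spider v F).neighborSet x).ncard = 2 := by
  obtain ⟨i, rfl, hi⟩ := Walk.mem_support_iff_exists_getVert.mp hx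
  rw [neighborSet_spider_of_ne hlegs ht hx hxv]
  refine (hG.isPath_path v t).ncard_neighborSet_toSubgraph_internal_eq_two ?_ ?_
  · rintro rfl
    exact hxv (Walk.getVert_zero _)
  · refine lt_of_le_of_ne hi ?_
    rintro rfl
    exact hxt (Walk.getVert_length _)

include hvF

lemma ncard_neighborSet_spider_of_mem {t : V} (ht : t ∈ F) :
    ((hG.spider v F).neighborSet t).ncard = 1 := by
  have htv : t ≠ v := fun h => hvF (h ▸ ht)
  rw [neighborSet_spider_of_ne hlegs ht (Walk.end_mem_support _) htv,
    (hG.isPath_path v t).neighborSet_toSubgraph_endpoint (Walk.not_nil_of_ne htv.symm),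
    Set.ncard_singleton]

lemma ncard_neighborSet_spider_center :
    ((hG.spider v F).neighborSet v).ncard = F.ncard := by
  have hnil : ∀ t ∈ F, ¬ (hG.path v t).Nil := fun t ht =>
    Walk.not_nil_of_ne fun h => hvF (h ▸ ht)
  have hnbr : (hG.spider v F).neighborSet v = (fun t => (hG.path v t).snd) '' F := by
    ext y
    simp only [Subgraph.mem_neighborSet, spider_adj, Set.mem_image]
    refine ⟨fun ⟨t, ht, hadj⟩ =>
      ⟨t, ht, (hG.isPath_path v t).snd_of_toSubgraph_adj hadj⟩, ?_⟩
    rintro ⟨t, ht, rfl⟩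
    exact ⟨t, ht, (hG.path v t).toSubgraph_adj_snd (hnil t ht)⟩
  rw [hnbr]
  refine Set.InjOn.ncard_image fun t ht t' ht' hsnd => ?_
  have hne : (hG.path v t).snd ≠ v := ((hG.path v t).adj_snd (hnil t ht)).ne.symm
  refine (hlegs t ht t' ht' _ (Walk.getVert_mem_support _ 1) ?_).resolve_left hne
  convert Walk.getVert_mem_support (hG.path v t') 1 using 1

lemma eq_or_ncard_neighborSet_spider_of_mem_verts {x : V} (hx : x ∈ (hG.spider v F).verts) :
    x = v ∨ x ∈ F ∧ ((hG.spider v F).neighborSet x).ncard = 1 ∨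
      ((hG.spider v F).neighborSet x).ncard = 2 := by
  obtain ⟨t, ht, hxt⟩ := mem_verts_spider.mp hx
  by_cases hxv : x = v
  · exact Or.inl hxv
  by_cases hxt' : x = t
  · subst hxt'
    exact Or.inr (Or.inl ⟨ht, ncard_neighborSet_spider_of_mem hvF hlegs ht⟩)
  · exact Or.inr (Or.inr (ncard_neighborSet_spider_of_ne hlegs ht hxt hxv hxt'))

lemma isSpider_spider (hF : F.Nonempty) : (hG.spider v F).IsSpider v where
  connected := connected_spider hF
  isAcyclic := hG.isAcyclic.subgraph _
  center_mem := mem_verts_spider.mpr (hF.imp fun t ht => ⟨ht, Walk.start_mem_support _⟩)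
  eq_center_of_two_lt u hu hdeg := by
    rcases eq_or_ncard_neighborSet_spider_of_mem_verts hvF hlegs hu with h | ⟨-, h⟩ | h
    · exact h
    all_goals omega
  exists_leaves := by
    have hleaf {t} (ht : t ∈ F) : t ∈ (hG.spider v F).verts :=
      mem_verts_spider.mpr ⟨t, ht, Walk.end_mem_support _⟩
    obtain ⟨t, ht⟩ := hF
    by_cases hF : ∃ t' ∈ F, t' ≠ t
    · obtain ⟨t', ht', hne⟩ := hF
      exact ⟨t', hleaf ht', t, hleaf ht, hne, ncard_neighborSet_spider_of_mem hvF hlegs ht',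
        ncard_neighborSet_spider_of_mem hvF hlegs ht⟩
    · have hFt : F = {t} := Set.eq_singleton_iff_unique_mem.mpr ⟨ht, by simpa using hF⟩
      refine ⟨v, mem_verts_spider.mpr ⟨t, ht, Walk.start_mem_support _⟩, t, hleaf ht,
        fun h => hvF (h ▸ ht), ?_, ncard_neighborSet_spider_of_mem hvF hlegs ht⟩
      rw [ncard_neighborSet_spider_center hvF hlegs, hFt, Set.ncard_singleton]

lemma mem_of_ncard_neighborSet_spider_eq_one {x : V} (hx : x ∈ (hG.spider v F).verts)
    (hdeg : ((hG.spider v F).neighborSet x).ncard = 1) : x ∈ F ∨ x = v ∧ F.ncard = 1 := by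
  rcases eq_or_ncard_neighborSet_spider_of_mem_verts hvF hlegs hx with rfl | ⟨h, -⟩ | h
  · exact Or.inr ⟨rfl, ncard_neighborSet_spider_center hvF hlegs ▸ hdeg⟩
  · exact Or.inl h
  · omega

variable {M : Set V}

lemma isSpiderDecomposition_spider (hF : F.Nonempty) (hFM : F ⊆ M) (hMF : M ⊆ insert v F)
    (hvM : F.ncard = 1 → v ∈ M) :
    IsSpiderDecomposition M [(hG.spider v F, v)] where
  isSpider p hp := by
    obtain rfl := List.mem_singleton.mp hp
    exact isSpider_spider hvF hlegs hF
  mem_of_leaf p hp x hx hdeg := by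
    obtain rfl := List.mem_singleton.mp hp
    rcases mem_of_ncard_neighborSet_spider_eq_one hvF hlegs hx hdeg with h | ⟨rfl, h⟩
    · exact hFM h
    · exact hvM h
  pairwise_disjoint := List.pairwise_singleton _ _
  covers m hm := by
    refine ⟨_, List.mem_singleton_self _, ?_⟩
    rcases hMF hm with rfl | h
    · exact Or.inl rfl
    · exact Or.inr ⟨mem_verts_spider.mpr ⟨m, h, Walk.end_mem_support _⟩,
        ncard_neighborSet_spider_of_mem hvF hlegs h⟩

end IsTree

/-- The subtree below `v` when `G` is rooted at `r`, described metrically (`v` lies on a geodesic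
from `r` to `u`) so that facts about the rooted order reduce to the triangle inequality. -/
def descendants (r v : V) : Set V := {u | G.dist r v + G.dist v u = G.dist r u}

lemma mem_descendants {r v u : V} :
    u ∈ G.descendants r v ↔ G.dist r v + G.dist v u = G.dist r u :=
  Iff.rfl

lemma mem_descendants_root (r u : V) : u ∈ G.descendants r r := by
  simp [descendants]

namespace Connected

variable (hG : G.Connected) {r u v w : V}
include hG

lemma mem_descendants_trans (huv : u ∈ G.descendants r v) (hvw : v ∈ G.descendants r w) :
    u ∈ G.descendants r w := by
  have := hG.dist_triangle (u := r) (v := w) (w := u)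
  have := hG.dist_triangle (u := w) (v := v) (w := u)
  simp only [mem_descendants] at *
  omega

lemma eq_of_mem_descendants (huv : u ∈ G.descendants r v) (hvu : v ∈ G.descendants r u) :
    u = v := by
  simp only [mem_descendants] at huv hvu
  rw [← hG.dist_eq_zero_iff, dist_comm]
  omega

lemma dist_lt_of_mem_descendants (huv : u ∈ G.descendants r v) (hne : u ≠ v) :
    G.dist r v < G.dist r u := by
  have := hG.pos_dist_of_ne hne.symm
  simp only [mem_descendants] at huv
  omega

lemma mem_descendants_of_dist_add_dist (hu : u ∈ G.descendants r v)
    (hw : G.dist v w + G.dist w u = G.dist v u) :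
    w ∈ G.descendants r v ∧ u ∈ G.descendants r w := by
  have := hG.dist_triangle (u := r) (v := v) (w := w)
  have := hG.dist_triangle (u := r) (v := w) (w := u)
  simp only [mem_descendants] at *
  omega

end Connected

lemma Connected.exists_lowest_with_two_descendants_in [Finite V] (hG : G.Connected) (r : V)
    {M : Set V} (hM : 2 ≤ M.ncard) :
    ∃ v, 2 ≤ (M ∩ G.descendants r v).ncard ∧
      ∀ w ∈ G.descendants r v, w ≠ v → (M ∩ G.descendants r w).ncard ≤ 1 := by
  have hr : r ∈ {w | 2 ≤ (M ∩ G.descendants r w).ncard} := by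
    simpa [Set.inter_eq_self_of_subset_left fun u _ => mem_descendants_root r u] using hM
  obtain ⟨v, hv, hmax⟩ := Set.Finite.exists_maximalFor (G.dist r) _ (Set.toFinite _) ⟨r, hr⟩
  refine ⟨v, hv, fun w hw hwv => ?_⟩
  by_contra! h
  have hlt := hG.dist_lt_of_mem_descendants hw hwv
  have := hmax h hlt.le
  omega

namespace IsTree

variable (hG : G.IsTree) {r v t x : V}

lemma mem_descendants_of_mem_support_path (ht : t ∈ G.descendants r v)
    (hx : x ∈ (hG.path v t).support) : x ∈ G.descendants r v ∧ t ∈ G.descendants r x :=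
  hG.connected.mem_descendants_of_dist_add_dist ht (hG.mem_support_path_iff.mp hx)

lemma mem_descendants_of_mem_support_path_root (hx : x ∈ (hG.path v r).support) :
    v ∈ G.descendants r x := by
  have h := hG.mem_support_path_iff.mp hx
  rw [mem_descendants, dist_comm (u := r), dist_comm (u := x) (v := v), dist_comm (u := r)]
  omega

lemma verts_spider_subset_descendants {F : Set V} (hF : F ⊆ G.descendants r v) :
    (hG.spider v F).verts ⊆ G.descendants r v := fun x hx => by
  obtain ⟨t, ht, hxt⟩ := mem_verts_spider.mp hx
  exact (hG.mem_descendants_of_mem_support_path (hF ht) hxt).1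

lemma exists_mem_descendants_of_mem_verts_spider {S F : Set V}
    (hS : S ⊆ insert r (G.descendants r v)) (hF : F ⊆ S)
    (hSD : (S ∩ G.descendants r v).Nonempty)
    (hx : x ∈ (hG.spider v F).verts) : ∃ m ∈ S, m ∈ G.descendants r x := by
  obtain ⟨t, ht, hxt⟩ := mem_verts_spider.mp hx
  rcases hS (hF ht) with rfl | htD
  · obtain ⟨m, hmS, hmD⟩ := hSD
    exact ⟨m, hmS, hG.connected.mem_descendants_trans hmD
      (hG.mem_descendants_of_mem_support_path_root hxt)⟩
  · exact ⟨t, hF ht, (hG.mem_descendants_of_mem_support_path htD hxt).2⟩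

section Lowest

variable [Finite V] {M S : Set V}
  (hlow : ∀ w ∈ G.descendants r v, w ≠ v → (M ∩ G.descendants r w).ncard ≤ 1)
  (hSM : S ⊆ M) (hS : S ⊆ insert r (G.descendants r v))
include hlow hSM hS

lemma pathsMeetOnlyAt_of_lowest : hG.PathsMeetOnlyAt v (S \ {v}) := by
  intro t ht t' ht' x hx hx'
  have side {t : V} (ht : t ∈ S) (hx : x ∈ (hG.path v t).support) :
      x ∈ G.descendants r v ∧ t ∈ G.descendants r x ∨
        t = r ∧ v ∈ G.descendants r x := by
    rcases hS ht with rfl | htD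
    · exact Or.inr ⟨rfl, hG.mem_descendants_of_mem_support_path_root hx⟩
    · exact Or.inl (hG.mem_descendants_of_mem_support_path htD hx)
  by_contra! h
  rcases side ht.1 hx with ⟨hxD, htx⟩ | ⟨rfl, hvx⟩ <;>
    rcases side ht'.1 hx' with ⟨hxD', htx'⟩ | ⟨rfl, hvx'⟩
  · exact h.2 ((Set.ncard_le_one (Set.toFinite _)).mp (hlow x hxD h.1)
      t ⟨hSM ht.1, htx⟩ t' ⟨hSM ht'.1, htx'⟩)
  · exact h.1 (hG.connected.eq_of_mem_descendants hxD hvx')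
  · exact h.1 (hG.connected.eq_of_mem_descendants hxD' hvx)
  · exact h.2 rfl

lemma isSpiderDecomposition_spider_of_lowest (hS2 : 2 ≤ (S ∩ G.descendants r v).ncard) :
    IsSpiderDecomposition S [(hG.spider v (S \ {v}), v)] ∧
      ∀ x ∈ (hG.spider v (S \ {v})).verts, ∃ m ∈ S, m ∈ G.descendants r x := by
  have hS2' : 2 ≤ S.ncard := hS2.trans (Set.ncard_le_ncard Set.inter_subset_left)
  have hne : (S \ {v}).Nonempty := Set.nonempty_of_ncard_ne_zero (by
    have := Set.pred_ncard_le_ncard_sdiff_singleton S v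
    omega)
  have hvS : (S \ {v}).ncard = 1 → v ∈ S := fun h1 => by
    by_contra hv
    rw [Set.sdiff_singleton_eq_self hv] at h1
    omega
  refine ⟨isSpiderDecomposition_spider (fun h => h.2 rfl)
      (hG.pathsMeetOnlyAt_of_lowest hlow hSM hS)
      hne Set.sdiff_subset (Set.subset_insert_sdiff_singleton v S) hvS,
    fun x hx => hG.exists_mem_descendants_of_mem_verts_spider hS Set.sdiff_subset
      (Set.nonempty_of_ncard_ne_zero (by omega)) hx⟩

end Lowest

include hG in
lemma exists_isSpiderDecomposition_of_lowest_of_sdiff [Finite V] {M : Set V}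
    {L : List (G.Subgraph × V)}
    (hlow : ∀ w ∈ G.descendants r v, w ≠ v → (M ∩ G.descendants r w).ncard ≤ 1)
    (hv2 : 2 ≤ (M ∩ G.descendants r v).ncard)
    (hL : IsSpiderDecomposition (M \ G.descendants r v) L)
    (hLspan : ∀ p ∈ L, ∀ x ∈ p.1.verts,
      ∃ m ∈ M \ G.descendants r v, m ∈ G.descendants r x) :
    ∃ L' : List (G.Subgraph × V), IsSpiderDecomposition M L' ∧
      ∀ p ∈ L', ∀ x ∈ p.1.verts, ∃ m ∈ M, m ∈ G.descendants r x := by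
  set D := G.descendants r v
  obtain ⟨hS, hSspan⟩ := hG.isSpiderDecomposition_spider_of_lowest hlow Set.inter_subset_left
    (fun x hx => Or.inr hx.2) (by rwa [Set.inter_assoc, Set.inter_self])
  have hdisj : ∀ p ∈ [(hG.spider v ((M ∩ D) \ {v}), v)], ∀ q ∈ L,
      Disjoint p.1.verts q.1.verts := by
    intro p hp q hq
    obtain rfl := List.mem_singleton.mp hp
    refine Set.disjoint_left.mpr fun x hxp hxq => ?_
    obtain ⟨m, hm, hmx⟩ := hLspan q hq x hxq
    exact hm.2 (hG.connected.mem_descendants_trans hmx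
      (hG.verts_spider_subset_descendants (fun t ht => ht.1.2) hxp))
  refine ⟨_, Set.inter_union_sdiff M D ▸ hS.append hL hdisj, ?_⟩
  rintro p (_ | ⟨_, hp⟩) x hx
  · obtain ⟨m, hm, hmx⟩ := hSspan x hx
    exact ⟨m, hm.1, hmx⟩
  · obtain ⟨m, hm, hmx⟩ := hLspan p hp x hx
    exact ⟨m, hm.1, hmx⟩

include hG in
theorem exists_isSpiderDecomposition [Finite V] (r : V) {M : Set V} (hr : r ∈ M)
    (hM : 2 ≤ M.ncard) :
    ∃ L : List (G.Subgraph × V), IsSpiderDecomposition M L ∧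
      ∀ p ∈ L, ∀ x ∈ p.1.verts, ∃ m ∈ M, m ∈ G.descendants r x := by
  induction hn : M.ncard using Nat.strong_induction_on generalizing M with
  | _ n ih =>
  obtain ⟨v, hv2, hlow⟩ := hG.connected.exists_lowest_with_two_descendants_in r hM
  set D := G.descendants r v
  have hvr : r ∈ D → v = r := fun hrD =>
    (hG.connected.eq_of_mem_descendants hrD (mem_descendants_root r v)).symm
  by_cases hout : 2 ≤ (M \ D).ncard
  · have hrD : r ∉ D := fun h => by
      obtain rfl := hvr h
      simp [D, Set.sdiff_eq_empty.mpr fun u _ => mem_descendants_root v u] at hout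
    have hlt : (M \ D).ncard < n := by
      have := Set.ncard_inter_add_ncard_sdiff_eq_ncard M D
      omega
    obtain ⟨L, hL, hLspan⟩ := ih _ hlt (M := M \ D) ⟨hr, hrD⟩ hout rfl
    exact hG.exists_isSpiderDecomposition_of_lowest_of_sdiff hlow hv2 hL hLspan
  · have hMD : M ⊆ insert r D := fun m hm => by
      by_cases hmD : m ∈ D
      · exact Or.inr hmD
      by_cases hr' : r ∈ D
      · obtain rfl := hvr hr'
        exact absurd (mem_descendants_root v m) hmD
      exact Or.inl ((Set.ncard_le_one (s := M \ D) (Set.toFinite _)).mp (by omega)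
        m ⟨hm, hmD⟩ r ⟨hr, hr'⟩)
    obtain ⟨hS, hSspan⟩ := hG.isSpiderDecomposition_spider_of_lowest hlow subset_rfl hMD hv2
    exact ⟨_, hS, by simpa using hSspan⟩

end IsTree

end SimpleGraph

theorem stmt_11_general {V : Type*} [Fintype V]
    (G : SimpleGraph V) (hG : G.IsTree)
    (r : V) (M : Set V) (hr : r ∈ M) (hM : 2 ≤ M.ncard) :
    ∃ (d : ℕ) (X : Fin d → G.Subgraph) (root center : Fin d → V),
      (∀ j, (X j).Connected) ∧
      (∀ j, (X j).coe.IsAcyclic) ∧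
      -- at most one vertex of degree > 2 (a spider)
      (∀ j, ∀ u ∈ (X j).verts, ∀ v ∈ (X j).verts,
        2 < ((X j).neighborSet u).ncard → 2 < ((X j).neighborSet v).ncard → u = v) ∧
      -- nontrivial: at least two leaves
      (∀ j, ∃ l₁ ∈ (X j).verts, ∃ l₂ ∈ (X j).verts, l₁ ≠ l₂ ∧
        ((X j).neighborSet l₁).ncard = 1 ∧ ((X j).neighborSet l₂).ncard = 1) ∧
      -- pairwise vertex-disjoint
      (∀ i j, i ≠ j → Disjoint (X i).verts (X j).verts) ∧
      -- leaves of the spiders are contained in M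
      (∀ j, ∀ v ∈ (X j).verts, ((X j).neighborSet v).ncard = 1 → v ∈ M) ∧
      (∀ j, root j ∈ (X j).verts ∧ root j ∈ M ∧ center j ∈ (X j).verts) ∧
      -- every vertex of M is a leaf, root, or center of some spider
      (∀ m ∈ M, ∃ j, m = root j ∨ m = center j ∨
        (m ∈ (X j).verts ∧ ((X j).neighborSet m).ncard = 1)) := by
  obtain ⟨L, hL, -⟩ := hG.exists_isSpiderDecomposition r hr hM
  have hspider (j : Fin L.length) := hL.isSpider _ (L.get_mem j)
  have hleaf (j : Fin L.length) :
      ∃ l ∈ (L.get j).1.verts, ((L.get j).1.neighborSet l).ncard = 1 := by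
    obtain ⟨l, hl, -, -, -, hdeg, -⟩ := (hspider j).exists_leaves
    exact ⟨l, hl, hdeg⟩
  choose root hroot hdeg using hleaf
  refine ⟨L.length, fun j => (L.get j).1, root, fun j => (L.get j).2,
    fun j => (hspider j).connected, fun j => (hspider j).isAcyclic,
    fun j u hu w hw hu2 hw2 => ((hspider j).eq_center_of_two_lt u hu hu2).trans
      ((hspider j).eq_center_of_two_lt w hw hw2).symm,
    fun j => (hspider j).exists_leaves, fun i j hij => ?_,
    fun j => hL.mem_of_leaf _ (L.get_mem j),
    fun j => ⟨hroot j, hL.mem_of_leaf _ (L.get_mem j) _ (hroot j) (hdeg j),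
      (hspider j).center_mem⟩, fun m hm => ?_⟩
  · rcases lt_or_gt_of_ne hij with h | h
    · exact List.pairwise_iff_get.mp hL.pairwise_disjoint i j h
    · exact (List.pairwise_iff_get.mp hL.pairwise_disjoint j i h).symm
  · obtain ⟨p, hp, hmp⟩ := hL.covers m hm
    obtain ⟨j, rfl⟩ := List.mem_iff_get.mp hp
    exact ⟨j, Or.inr hmp⟩

/-- Spider decomposition.  `G` is a finite tree rooted at `r`, `M` a set of vertices
with `r ∈ M`, `|M| ≥ 2`, and every leaf of `G` (degree-1 vertex other than the root)
lies in `M`.  Then `G` decomposes into vertex-disjoint nontrivial spiders (subtrees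
with at most one vertex of degree `> 2` and at least two leaves), each with a
designated root and center, whose leaves are contained in `M`, and such that every
vertex of `M` is a leaf, root, or center of some spider.  Degrees inside a subgraph
`H` are measured as `(H.neighborSet v).ncard`. -/
theorem stmt_11 {V : Type*} [Fintype V] [DecidableEq V]
    (G : SimpleGraph V) [DecidableRel G.Adj] (hG : G.IsTree)
    (r : V) (M : Set V) (hr : r ∈ M) (hM : 2 ≤ M.ncard)
    (hleaf : ∀ v : V, v ≠ r → G.degree v = 1 → v ∈ M) :
    ∃ (d : ℕ) (X : Fin d → G.Subgraph) (root center : Fin d → V),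
      (∀ j, (X j).Connected) ∧
      (∀ j, (X j).coe.IsAcyclic) ∧
      -- at most one vertex of degree > 2 (a spider)
      (∀ j, ∀ u ∈ (X j).verts, ∀ v ∈ (X j).verts,
        2 < ((X j).neighborSet u).ncard → 2 < ((X j).neighborSet v).ncard → u = v) ∧
      -- nontrivial: at least two leaves
      (∀ j, ∃ l₁ ∈ (X j).verts, ∃ l₂ ∈ (X j).verts, l₁ ≠ l₂ ∧
        ((X j).neighborSet l₁).ncard = 1 ∧ ((X j).neighborSet l₂).ncard = 1) ∧
      -- pairwise vertex-disjoint
      (∀ i j, i ≠ j → Disjoint (X i).verts (X j).verts) ∧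
      -- leaves of the spiders are contained in M
      (∀ j, ∀ v ∈ (X j).verts, ((X j).neighborSet v).ncard = 1 → v ∈ M) ∧
      (∀ j, root j ∈ (X j).verts ∧ root j ∈ M ∧ center j ∈ (X j).verts) ∧
      -- every vertex of M is a leaf, root, or center of some spider
      (∀ m ∈ M, ∃ j, m = root j ∨ m = center j ∨
        (m ∈ (X j).verts ∧ ((X j).neighborSet m).ncard = 1)) :=
  stmt_11_general G hG r M hr hM
end

section
/- Suppose a process maintains a positive integer count F, starting at F_1 = N ≥ 2 and ending at 1, where at step i the count decreases by h_i − 1 for some integer h_i ≥ 2, and the step incurs cost ΔC_i ≤ (h_i / F_i) · OPT. Then the total cost Σ_i ΔC_i is at most (H_{N} + H_{N-1}) · OPT ≤ (2 ln N + 2) · OPT. -/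
/-!
A step that lowers the count from `a` to `b = a - h + 1` costs at most `h / a ≤ 2 (a - b) / a`
times `OPT` (as `h ≥ 2`), and `(a - b) / a ≤ H_a - H_b` since each of the `a - b` terms
`1/(b+1), …, 1/a` is at least `1/a`. The charges telescope to `2 (H_N - H_1) ≤ H_N + H_{N-1}`,
and `H_n ≤ 1 + log n`.
-/

open Finset

lemma div_le_harmonic_sub_harmonic {a b : ℕ} (hba : b ≤ a) :
    ((a : ℚ) - b) / a ≤ harmonic a - harmonic b := by
  rw [harmonic, harmonic, ← sum_Ico_eq_sub _ hba]
  calc ((a : ℚ) - b) / a = #(Ico b a) • (a : ℚ)⁻¹ := by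
        simp [Nat.cast_sub hba, div_eq_mul_inv]
    _ ≤ ∑ i ∈ Ico b a, ((i + 1 : ℕ) : ℚ)⁻¹ :=
        card_nsmul_le_sum _ _ _ fun i hi ↦
          inv_anti₀ (by positivity) (by exact_mod_cast (mem_Ico.1 hi).2)

lemma div_le_two_mul_harmonic_sub_harmonic {a b h : ℕ} (hh : 2 ≤ h) (hstep : b + h = a + 1) :
    (h : ℚ) / a ≤ 2 * (harmonic a - harmonic b) := by
  have hstepℚ : (b : ℚ) + h = a + 1 := by exact_mod_cast hstep
  have hhℚ : (2 : ℚ) ≤ h := by exact_mod_cast hh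
  calc (h : ℚ) / a ≤ 2 * ((a - b) / a) := by
        rw [mul_div_assoc']
        gcongr
        linarith
    _ ≤ 2 * (harmonic a - harmonic b) := by
        gcongr
        exact div_le_harmonic_sub_harmonic (by omega)

lemma sum_le_two_mul_harmonic_sub_harmonic {I : ℕ} {F h : ℕ → ℕ} {ΔC : ℕ → ℝ} {OPT : ℝ}
    (hOPT : 0 ≤ OPT) (hh : ∀ i < I, 2 ≤ h i) (hstep : ∀ i < I, F (i + 1) + h i = F i + 1)
    (hcost : ∀ i < I, ΔC i ≤ ((h i : ℝ) / (F i : ℝ)) * OPT) :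
    ∑ i ∈ range I, ΔC i ≤ 2 * ((harmonic (F 0) : ℝ) - harmonic (F I)) * OPT := by
  have hcharge : ∀ i ∈ range I,
      ΔC i ≤ 2 * ((harmonic (F i) : ℝ) - harmonic (F (i + 1))) * OPT := by
    intro i hi
    rw [mem_range] at hi
    refine (hcost i hi).trans (mul_le_mul_of_nonneg_right ?_ hOPT)
    have hratio := Rat.cast_le (K := ℝ) |>.2 <|
      div_le_two_mul_harmonic_sub_harmonic (hh i hi) (hstep i hi)
    push_cast at hratio
    exact hratio
  refine (sum_le_sum hcharge).trans_eq ?_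
  rw [← sum_mul, ← mul_sum, sum_range_sub' (fun i ↦ (harmonic (F i) : ℝ))]

lemma harmonic_pred_le (n : ℕ) : harmonic (n - 1) ≤ harmonic n := by
  cases n with
  | zero => rfl
  | succ m =>
    rw [Nat.add_sub_cancel, harmonic_succ]
    exact le_add_of_nonneg_right (by positivity)

lemma two_mul_harmonic_sub_one_le (n : ℕ) :
    2 * (harmonic n - 1) ≤ harmonic n + harmonic (n - 1) := by
  cases n with
  | zero => norm_num
  | succ m =>
    have hinv : ((m + 1 : ℕ) : ℚ)⁻¹ ≤ 1 := inv_le_one_of_one_le₀ (by simp)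
    rw [Nat.add_sub_cancel, harmonic_succ]
    linarith

lemma harmonic_add_harmonic_pred_le (n : ℕ) :
    (harmonic n : ℝ) + harmonic (n - 1) ≤ 2 * Real.log n + 2 := by
  have hpred : (harmonic (n - 1) : ℝ) ≤ harmonic n := by exact_mod_cast harmonic_pred_le n
  linarith [harmonic_le_one_add_log n]

theorem stmt_14_general (N : ℕ) (OPT : ℝ) (hOPT : 0 ≤ OPT)
    (I : ℕ) (F : ℕ → ℕ) (h : ℕ → ℕ) (ΔC : ℕ → ℝ)
    (hF0 : F 0 = N) (hFI : F I = 1)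
    (hh : ∀ i < I, 2 ≤ h i)
    (hstep : ∀ i < I, (F (i + 1) : ℤ) = (F i : ℤ) - (h i : ℤ) + 1)
    (hcost : ∀ i < I, ΔC i ≤ ((h i : ℝ) / (F i : ℝ)) * OPT) :
    (∑ i ∈ Finset.range I, ΔC i) ≤
        ((harmonic N : ℝ) + (harmonic (N - 1) : ℝ)) * OPT ∧
      ((harmonic N : ℝ) + (harmonic (N - 1) : ℝ)) * OPT ≤
        (2 * Real.log N + 2) * OPT := by
  have hstepℕ : ∀ i < I, F (i + 1) + h i = F i + 1 := fun i hi ↦ by have := hstep i hi; omega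
  have hsum := sum_le_two_mul_harmonic_sub_harmonic hOPT hh hstepℕ hcost
  have hharmonic_one : harmonic 1 = 1 := by simp [harmonic]
  rw [hF0, hFI, hharmonic_one, Rat.cast_one] at hsum
  have hharmonic_bound : 2 * ((harmonic N : ℝ) - 1) ≤ harmonic N + harmonic (N - 1) := by
    exact_mod_cast two_mul_harmonic_sub_one_le N
  exact ⟨hsum.trans (mul_le_mul_of_nonneg_right hharmonic_bound hOPT),
    mul_le_mul_of_nonneg_right (harmonic_add_harmonic_pred_le N) hOPT⟩

/-- The charging argument: a process maintains a positive count `F i`, starting at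
`F 0 = N ≥ 2` and ending at `F I = 1`; at step `i` the count decreases by `h i - 1`
with `h i ≥ 2`, and the step incurs cost `ΔC i ≤ (h i / F i) · OPT`.  Then the total
cost is at most `(H_N + H_{N-1}) · OPT ≤ (2 ln N + 2) · OPT`, where `harmonic` is
Mathlib's harmonic number. -/
theorem stmt_14 (N : ℕ) (hN : 2 ≤ N) (OPT : ℝ) (hOPT : 0 ≤ OPT)
    (I : ℕ) (F : ℕ → ℕ) (h : ℕ → ℕ) (ΔC : ℕ → ℝ)
    (hF0 : F 0 = N) (hFI : F I = 1)
    (hpos : ∀ i ≤ I, 1 ≤ F i)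
    (hh : ∀ i < I, 2 ≤ h i)
    (hstep : ∀ i < I, (F (i + 1) : ℤ) = (F i : ℤ) - (h i : ℤ) + 1)
    (hcost : ∀ i < I, ΔC i ≤ ((h i : ℝ) / (F i : ℝ)) * OPT) :
    (∑ i ∈ Finset.range I, ΔC i) ≤
        ((harmonic N : ℝ) + (harmonic (N - 1) : ℝ)) * OPT ∧
      ((harmonic N : ℝ) + (harmonic (N - 1) : ℝ)) * OPT ≤
        (2 * Real.log N + 2) * OPT :=
  stmt_14_general N OPT hOPT I F h ΔC hF0 hFI hh hstep hcost
end
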